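/- In the NFA for the status field of a root-level QNode, from every 'wait' state W₁, W₂, W₃, W₄ there is a path to the lock-owning state U₁ that uses no 'timeout' edges (starvation freedom for non-aborting threads). -/

import Mathlib

inductive S : Type
  | R1 | R2 | W1 | W2 | W3 | W4 | U1 | U2 | U3 | A1
deriving DecidableEq

/-- Edges of the root-level status NFA. -/
inductive E : S → S → Prop
  | a1 : E .R1 .W1
  | a2 : E .R1 .W2
  | a3 : E .A1 .W1
  | a4 : E .U2 .W3
  | a5 : E .U3 .W4
  | e1 : E .W2 .U1
  | e2 : E .U1 .R1
  | e3 : E .U1 .U3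
  | e4 : E .U3 .R1
  | e5 : E .W4 .U3
  | e6 : E .W4 .R2
  | e7 : E .W1 .U1
  | e8 : E .W1 .A1
  | e9 : E .A1 .U2
  | e10 : E .U2 .R1
  | e11 : E .U2 .U3
  | e12 : E .W3 .U2
  | e13 : E .W3 .R2
  | e14 : E .R2 .U1
  | e15 : E .R2 .A1


/-- The 'timeout' edges of the root-level status NFA. -/
inductive Timeout : S → S → Prop
  | t1 : Timeout .W1 .A1
  | t2 : Timeout .W4 .U3
  | t3 : Timeout .W3 .U2
  | t4 : Timeout .U1 .U3
  | t5 : Timeout .U2 .U3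
  | t6 : Timeout .R2 .A1

/-! W₁ and W₂ hand the lock over directly (W₁ → U₁, W₂ → U₁); W₃ and W₄ reach it through
R₂ (W₃ → R₂, W₄ → R₂, then R₂ → U₁). None of these edges is a timeout. -/

abbrev NonTimeoutStep (a b : S) : Prop := E a b ∧ ¬ Timeout a b

open Relation

theorem reflTransGen_nonTimeoutStep_R2_U1 : ReflTransGen NonTimeoutStep .R2 .U1 :=
  .single ⟨.e14, nofun⟩

/-- Starvation freedom for non-aborting threads: from every wait state there
is a path to the lock-owning state U₁ that uses no timeout edges. -/
theorem root_status_starvation_free :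
    ∀ s : S, s = S.W1 ∨ s = S.W2 ∨ s = S.W3 ∨ s = S.W4 →
      Relation.ReflTransGen (fun a b => E a b ∧ ¬ Timeout a b) s S.U1 := by
  rintro s (rfl | rfl | rfl | rfl)
  · exact .single ⟨.e7, nofun⟩
  · exact .single ⟨.e1, nofun⟩
  · exact .head ⟨.e13, nofun⟩ reflTransGen_nonTimeoutStep_R2_U1
  · exact .head ⟨.e6, nofun⟩ reflTransGen_nonTimeoutStep_R2_U1
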